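/- arXiv:1002.3863 — 2 statements merged into one kernel-verified Lean document; each statement's English description precedes it below -/
import Mathlib

section
/- The map sending an unordered pair of distinct points {p,q} in ℙ^2 to the line pq is a locally trivial fibration B(2, ℙ^2) → (ℙ^2)^∨ over the dual projective plane, with fibre isomorphic to B(2, ℙ^1). -/
open CategoryTheory

/-- The singular chain complex with rational coefficients. -/
noncomputable def singularChainComplex : TopCat.{0} ⥤ ChainComplex (ModuleCat.{0} ℚ) ℕ :=
  TopCat.toSSet ⋙ ((SimplicialObject.whiskering _ _).obj (ModuleCat.free ℚ)) ⋙
    AlgebraicTopology.alternatingFaceMapComplex _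

/-- Singular homology with rational coefficients, as a functor. -/
noncomputable def singularHomologyFunctor (n : ℕ) : TopCat.{0} ⥤ ModuleCat.{0} ℚ :=
  singularChainComplex ⋙ HomologicalComplex.homologyFunctor _ _ n

/-- Singular homology of a space. -/
noncomputable abbrev SH (n : ℕ) (X : Type) [TopologicalSpace X] : ModuleCat.{0} ℚ :=
  (singularHomologyFunctor n).obj (TopCat.of X)

/-- The map induced on singular homology by a continuous map. -/
noncomputable def SHmap (n : ℕ) {X Y : Type} [TopologicalSpace X] [TopologicalSpace Y]
    (f : C(X, Y)) : SH n X →ₗ[ℚ] SH n Y :=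
  ((singularHomologyFunctor n).map (show TopCat.of X ⟶ TopCat.of Y from TopCat.ofHom f)).hom

/-- The unique map to the one point space. -/
def toPointMap (X : Type) [TopologicalSpace X] : C(X, PUnit) :=
  ⟨fun _ => PUnit.unit, continuous_const⟩

/-- Borel--Moore homology (with rational coefficients) of a (locally compact) space,
defined as the reduced singular homology of the one-point compactification, i.e. as the
kernel of the map induced by the collapse map to a point. -/
noncomputable def BM (n : ℕ) (X : Type) [TopologicalSpace X] :
    Submodule ℚ (SH n (OnePoint X)) :=
  LinearMap.ker (SHmap n (toPointMap (OnePoint X)))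
/-- The space of ordered configurations of `k` distinct points in `Z`. -/
def OrdConf (k : ℕ) (Z : Type) [TopologicalSpace Z] : Type :=
  {w : Fin k → Z // Function.Injective w}

instance (k : ℕ) (Z : Type) [TopologicalSpace Z] : TopologicalSpace (OrdConf k Z) :=
  instTopologicalSpaceSubtype

/-- Two ordered configurations are equivalent if they differ by a permutation. -/
def confSetoid (k : ℕ) (Z : Type) [TopologicalSpace Z] : Setoid (OrdConf k Z) where
  r w w' := ∃ σ : Equiv.Perm (Fin k), w.1 = w'.1 ∘ σ
  iseqv := by
    refine ⟨fun w => ⟨1, rfl⟩, ?_, ?_⟩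
    · rintro w w' ⟨σ, h⟩
      exact ⟨σ⁻¹, by funext x; simp [h]⟩
    · rintro w w' w'' ⟨σ, h⟩ ⟨τ, h'⟩
      exact ⟨τ * σ, by funext x; simp [h, h', Equiv.Perm.mul_apply]⟩

/-- The space `B(k,Z)` of unordered configurations of `k` distinct points in `Z`. -/
def UnordConf (k : ℕ) (Z : Type) [TopologicalSpace Z] : Type :=
  Quotient (confSetoid k Z)

instance (k : ℕ) (Z : Type) [TopologicalSpace Z] : TopologicalSpace (UnordConf k Z) :=
  instTopologicalSpaceQuotient

/-- Two ordered configurations are evenly equivalent if they differ by an even permutation. -/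
def evenConfSetoid (k : ℕ) (Z : Type) [TopologicalSpace Z] : Setoid (OrdConf k Z) where
  r w w' := ∃ σ : Equiv.Perm (Fin k), Equiv.Perm.sign σ = 1 ∧ w.1 = w'.1 ∘ σ
  iseqv := by
    refine ⟨fun w => ⟨1, by simp, rfl⟩, ?_, ?_⟩
    · rintro w w' ⟨σ, hσ, h⟩
      exact ⟨σ⁻¹, by simp [hσ], by funext x; simp [h]⟩
    · rintro w w' w'' ⟨σ, hσ, h⟩ ⟨τ, hτ, h'⟩
      exact ⟨τ * σ, by simp [hσ, hτ], by funext x; simp [h, h', Equiv.Perm.mul_apply]⟩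

/-- The orientation double cover of `B(k,Z)`: configurations up to even permutations. -/
def EvenConf (k : ℕ) (Z : Type) [TopologicalSpace Z] : Type :=
  Quotient (evenConfSetoid k Z)

instance (k : ℕ) (Z : Type) [TopologicalSpace Z] : TopologicalSpace (EvenConf k Z) :=
  instTopologicalSpaceQuotient

/-- An odd transposition in `Perm (Fin k)` for `k ≥ 2`. -/
def theSwap (k : ℕ) (hk : 2 ≤ k) : Equiv.Perm (Fin k) :=
  Equiv.swap ⟨0, by omega⟩ ⟨1, by omega⟩

theorem theSwap_sign (k : ℕ) (hk : 2 ≤ k) : Equiv.Perm.sign (theSwap k hk) = -1 :=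
  Equiv.Perm.sign_swap (by simp [Fin.ext_iff])

/-- The deck involution of the double cover `EvenConf k Z → UnordConf k Z`, induced by an
(arbitrary, odd) transposition. -/
def confSwap (k : ℕ) (Z : Type) [TopologicalSpace Z] (hk : 2 ≤ k) :
    EvenConf k Z → EvenConf k Z :=
  Quotient.map
    (fun w => ⟨w.1 ∘ theSwap k hk, w.2.comp (Equiv.injective _)⟩)
    (by
      rintro w w' ⟨σ, hσ, h⟩
      refine ⟨(theSwap k hk)⁻¹ * σ * theSwap k hk,
        by simp [map_mul, map_inv, hσ, theSwap_sign k hk], ?_⟩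
      funext x
      have h2 : ∀ y, w.1 y = w'.1 (σ y) := fun y => congrFun h y
      simp only [Function.comp_apply, Equiv.Perm.mul_apply, Equiv.Perm.inv_def,
        Equiv.apply_symm_apply]
      exact h2 _)

theorem confSwap_continuous (k : ℕ) (Z : Type) [TopologicalSpace Z] (hk : 2 ≤ k) :
    Continuous (confSwap k Z hk) := by
  apply Continuous.quotient_map'
  apply Continuous.subtype_mk
  exact continuous_pi fun i => (continuous_apply _).comp continuous_subtype_val

theorem confSwap_involutive (k : ℕ) (Z : Type) [TopologicalSpace Z] (hk : 2 ≤ k) :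
    Function.Involutive (confSwap k Z hk) := by
  intro x
  induction x using Quotient.ind
  apply Quotient.sound
  refine ⟨1, by simp, ?_⟩
  funext y
  simp [theSwap, Equiv.swap_apply_self]

/-- The deck involution as a homeomorphism. -/
def confSwapHomeo (k : ℕ) (Z : Type) [TopologicalSpace Z] (hk : 2 ≤ k) :
    EvenConf k Z ≃ₜ EvenConf k Z where
  toFun := confSwap k Z hk
  invFun := confSwap k Z hk
  left_inv := confSwap_involutive k Z hk
  right_inv := confSwap_involutive k Z hk
  continuous_toFun := confSwap_continuous k Z hk
  continuous_invFun := confSwap_continuous k Z hk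
/-- The deck involution extended to the one-point compactification. -/
noncomputable def onePointSwap (k : ℕ) (Z : Type) [TopologicalSpace Z] (hk : 2 ≤ k) :
    C(OnePoint (EvenConf k Z), OnePoint (EvenConf k Z)) :=
  ((Homeomorph.onePointCongr (confSwapHomeo k Z hk)) :
    C(OnePoint (EvenConf k Z), OnePoint (EvenConf k Z)))

/-- Borel--Moore homology of the unordered configuration space `B(k,Z)` with coefficients in
the rank-one sign local system `±ℚ`, realized as the anti-invariant part of the Borel--Moore
homology of the orientation double cover `EvenConf k Z` under the deck involution. -/
noncomputable def twistedBM (n k : ℕ) (Z : Type) [TopologicalSpace Z] (hk : 2 ≤ k) :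
    Submodule ℚ (SH n (OnePoint (EvenConf k Z))) :=
  BM n (EvenConf k Z) ⊓
    LinearMap.ker (SHmap n (onePointSwap k Z hk) + LinearMap.id)

/-- Complex projective `N`-space, as the topological quotient of the space of nonzero vectors
in `ℂ^{N+1}` by scaling. -/
def projSetoid (N : ℕ) : Setoid {v : Fin (N + 1) → ℂ // v ≠ 0} where
  r v w := ∃ c : ℂ, c ≠ 0 ∧ w.1 = c • v.1
  iseqv := by
    refine ⟨fun v => ⟨1, one_ne_zero, by simp⟩, ?_, ?_⟩
    · rintro v w ⟨c, hc, h⟩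
      exact ⟨c⁻¹, inv_ne_zero hc, by rw [h, smul_smul, inv_mul_cancel₀ hc, one_smul]⟩
    · rintro u v w ⟨c, hc, h⟩ ⟨d, hd, h'⟩
      exact ⟨d * c, mul_ne_zero hd hc, by rw [h', h, smul_smul]⟩

def ProjSpace (N : ℕ) : Type := Quotient (projSetoid N)

noncomputable instance (N : ℕ) : TopologicalSpace (ProjSpace N) := instTopologicalSpaceQuotient

/-- The point of projective space determined by a nonzero vector. -/
def ProjSpace.mk {N : ℕ} (v : Fin (N + 1) → ℂ) (h : v ≠ 0) : ProjSpace N :=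
  Quotient.mk (projSetoid N) ⟨v, h⟩

/-!
Fix `w₁ w₂ : ℂ³` and put `c = [w₁ ⨯₃ w₂]`. Over the open set `U` of lines `[u]` not through `c`
(`u ⬝ᵥ w₁ ⨯₃ w₂ ≠ 0`), projection from `c`, `ψ p = (w₂ ⬝ᵥ p, -(w₁ ⬝ᵥ p))`, identifies each line
with `ℙ¹`, the inverse being induced by `φᵤ s = u ⨯₃ (s₀ • w₁ + s₁ • w₂)`: both `ψ ∘ φᵤ` and
`φᵤ ∘ ψ` (on `u ⬝ᵥ p = 0`) are multiplication by `u ⬝ᵥ w₁ ⨯₃ w₂`. So `{p, q} ↦ (pq, {ψ p, ψ q})`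
trivialises the line map over `U`, with inverse `([u], {s, t}) ↦ {φᵤ s, φᵤ t}`, and every line
avoids some `c`. All these maps descend from polynomial maps on pairs of linearly independent
vectors, which cover `B(2, ℙᴺ)` by an open quotient map; this gives continuity.
-/

open Matrix Topology

theorem isOpenQuotientMap_quotientMk_of_homeomorph {X ι : Type*} [TopologicalSpace X]
    (s : Setoid X) (g : ι → X ≃ₜ X) (hs : ∀ x y, s x y ↔ ∃ i, g i x = y) :
    IsOpenQuotientMap (Quotient.mk s) := by
  refine ⟨Quotient.mk_surjective, continuous_quotient_mk', fun V hV => ?_⟩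
  have hsat : Quotient.mk s ⁻¹' (Quotient.mk s '' V) = ⋃ i, g i '' V := by
    ext y
    simp only [Set.mem_preimage, Set.mem_image, Set.mem_iUnion, Quotient.eq, hs]
    exact ⟨fun ⟨x, hx, i, hi⟩ => ⟨i, x, hx, hi⟩, fun ⟨i, x, hx, hi⟩ => ⟨x, hx, i, hi⟩⟩
  change IsOpen (Quotient.mk s ⁻¹' (Quotient.mk s '' V))
  rw [hsat]
  exact isOpen_iUnion fun i => (g i).isOpenMap V hV

namespace IsOpenQuotientMap

variable {X Y Z : Type*} [TopologicalSpace X] [TopologicalSpace Y] [TopologicalSpace Z]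
  {f : X → Y}

noncomputable def lift (hf : IsOpenQuotientMap f) (g : C(X, Z))
    (h : Function.FactorsThrough g f) : C(Y, Z) :=
  IsQuotientMap.lift (f := ⟨f, hf.continuous⟩) hf.isQuotientMap g h

theorem lift_apply (hf : IsOpenQuotientMap f) (g : C(X, Z)) (h : Function.FactorsThrough g f)
    (x : X) : hf.lift g h (f x) = g x :=
  DFunLike.congr_fun (IsQuotientMap.lift_comp (f := ⟨f, hf.continuous⟩) hf.isQuotientMap g h) x

end IsOpenQuotientMap

theorem Continuous.crossProduct {X R : Type*} [TopologicalSpace X] [CommRing R]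
    [TopologicalSpace R] [IsTopologicalRing R] {f g : X → Fin 3 → R} (hf : Continuous f)
    (hg : Continuous g) : Continuous fun x => f x ⨯₃ g x := by
  have hf' (i : Fin 3) : Continuous fun x => f x i := (continuous_apply i).comp hf
  have hg' (i : Fin 3) : Continuous fun x => g x i := (continuous_apply i).comp hg
  refine continuous_pi fun i => ?_
  fin_cases i <;> simp only [cross_apply] <;> fun_prop

theorem LinearIndependent.comp_of_comp_eq_smul {K V W ι : Type*} [Field K] [AddCommGroup V]
    [Module K V] [AddCommGroup W] [Module K W] {v : ι → V} (hv : LinearIndependent K v)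
    (f : V →ₗ[K] W) (g : W →ₗ[K] V) {d : K} (hd : d ≠ 0) (h : ∀ i, g (f (v i)) = d • v i) :
    LinearIndependent K (f ∘ v) := by
  refine .of_comp g ?_
  convert hv.units_smul fun _ => Units.mk0 d hd using 1
  exact funext h

section CrossProduct

variable {R : Type*} [CommRing R]

theorem dotProduct_crossProduct_eq_zero (v : Fin 2 → Fin 3 → R) (i : Fin 2) :
    v 0 ⨯₃ v 1 ⬝ᵥ v i = 0 := by
  rw [dotProduct_comm]
  fin_cases i
  exacts [dot_self_cross _ _, dot_cross_self _ _]

theorem exists_dotProduct_crossProduct_ne_zero {β : Fin 3 → R} (hβ : β ≠ 0) :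
    ∃ w₁ w₂ : Fin 3 → R, β ⬝ᵥ w₁ ⨯₃ w₂ ≠ 0 := by
  by_contra! h
  refine hβ (funext fun i => ?_)
  fin_cases i
  · simpa [cross_apply, dotProduct, Fin.sum_univ_succ] using h (Pi.single 1 1) (Pi.single 2 1)
  · simpa [cross_apply, dotProduct, Fin.sum_univ_succ] using h (Pi.single 2 1) (Pi.single 0 1)
  · simpa [cross_apply, dotProduct, Fin.sum_univ_succ] using h (Pi.single 0 1) (Pi.single 1 1)

variable (w₁ w₂ : Fin 3 → R)

/- `projFrom w₁ w₂` is the projection from the point `w₁ ⨯₃ w₂`, and `lineParam w₁ w₂ u`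
parametrises the line `u ⬝ᵥ x = 0`. -/
def projFrom : (Fin 3 → R) →ₗ[R] Fin 2 → R := (Matrix.of ![w₂, -w₁]).mulVecLin

def lineParam (u : Fin 3 → R) : (Fin 2 → R) →ₗ[R] Fin 3 → R :=
  crossProduct u ∘ₗ (Matrix.of ![w₁, w₂]).vecMulLinear

theorem lineParam_apply (u : Fin 3 → R) (s : Fin 2 → R) :
    lineParam w₁ w₂ u s = u ⨯₃ (s ᵥ* Matrix.of ![w₁, w₂]) := rfl

theorem projFrom_lineParam (u : Fin 3 → R) (s : Fin 2 → R) :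
    projFrom w₁ w₂ (lineParam w₁ w₂ u s) = (u ⬝ᵥ w₁ ⨯₃ w₂) • s := by
  ext i
  fin_cases i <;>
  · simp [projFrom, lineParam, cross_apply, dotProduct, Fin.sum_univ_succ, vecHead, vecTail]
    ring

theorem lineParam_projFrom (u p : Fin 3 → R) :
    lineParam w₁ w₂ u (projFrom w₁ w₂ p) = (u ⬝ᵥ w₁ ⨯₃ w₂) • p - (u ⬝ᵥ p) • w₁ ⨯₃ w₂ := by
  ext i
  fin_cases i <;>
  · simp [projFrom, lineParam, cross_apply, dotProduct, Fin.sum_univ_succ, vecHead, vecTail]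
    ring

theorem lineParam_crossProduct_projFrom (v : Fin 2 → Fin 3 → R) (i : Fin 2) :
    lineParam w₁ w₂ (v 0 ⨯₃ v 1) (projFrom w₁ w₂ (v i)) = (v 0 ⨯₃ v 1 ⬝ᵥ w₁ ⨯₃ w₂) • v i := by
  rw [lineParam_projFrom, dotProduct_crossProduct_eq_zero, zero_smul, sub_zero]

theorem dotProduct_lineParam (u : Fin 3 → R) (s : Fin 2 → R) :
    u ⬝ᵥ lineParam w₁ w₂ u s = 0 :=
  dot_self_cross _ _

theorem lineParam_smul (c : R) (u : Fin 3 → R) :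
    lineParam w₁ w₂ (c • u) = c • lineParam w₁ w₂ u := by
  ext; simp [lineParam]

end CrossProduct

namespace ProjSpace

variable {N : ℕ}

variable (N) in
theorem isOpenQuotientMap_mk : IsOpenQuotientMap (Quotient.mk (projSetoid N)) :=
  isOpenQuotientMap_quotientMk_of_homeomorph _
    (fun c : ℂˣ => (Homeomorph.smulOfNeZero (c : ℂ) c.ne_zero).subtype fun v => by
      simp [c.ne_zero])
    fun v w => ⟨fun ⟨c, hc, h⟩ => ⟨Units.mk0 c hc, Subtype.ext h.symm⟩,
      fun ⟨c, h⟩ => ⟨c, c.ne_zero, congrArg Subtype.val h.symm⟩⟩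

theorem mk_eq_mk_iff {a b : Fin (N + 1) → ℂ} (ha : a ≠ 0) (hb : b ≠ 0) :
    mk a ha = mk b hb ↔ ¬ LinearIndependent ℂ ![a, b] := by
  change Quotient.mk (projSetoid N) _ = Quotient.mk _ _ ↔ _
  rw [LinearIndependent.pair_iff' ha, not_forall_not, Quotient.eq]
  exact ⟨fun ⟨c, _, h⟩ => ⟨c, h.symm⟩, fun ⟨c, h⟩ =>
    ⟨c, by rintro rfl; exact hb (by simp [← h]), h.symm⟩⟩

theorem linearIndependent_iff_injective_mk {v : Fin 2 → Fin (N + 1) → ℂ} (hv : ∀ i, v i ≠ 0) :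
    LinearIndependent ℂ v ↔ Function.Injective fun i => mk (v i) (hv i) := by
  have hv2 : v = ![v 0, v 1] := List.ofFn_inj.mp rfl
  have hmk : (fun i => mk (v i) (hv i)) = ![mk (v 0) (hv 0), mk (v 1) (hv 1)] := by
    ext i; fin_cases i <;> rfl
  rw [hmk, injective_pair_iff_ne, Ne, mk_eq_mk_iff, not_not, ← hv2]

theorem mk_crossProduct_eq_of_dotProduct_eq_zero {a b u : Fin 3 → ℂ} (hab : a ⨯₃ b ≠ 0)
    (hu : u ≠ 0) (ha : u ⬝ᵥ a = 0) (hb : u ⬝ᵥ b = 0) : mk (a ⨯₃ b) hab = mk u hu := by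
  rw [mk_eq_mk_iff, ← crossProduct_ne_zero_iff_linearIndependent, not_not, ← cross_anticomm,
    neg_eq_zero, cross_cross_eq_smul_sub_smul', dotProduct_comm a, ha, hb, zero_smul, zero_smul,
    sub_zero]

/-- In dual coordinates, the hyperplanes not passing through the point `[z]`. -/
def nonOrthogonal (z : Fin (N + 1) → ℂ) : Set (ProjSpace N) :=
  Quotient.mk _ '' {u | u.1 ⬝ᵥ z ≠ 0}

theorem isOpen_nonOrthogonal (z : Fin (N + 1) → ℂ) : IsOpen (nonOrthogonal z) :=
  (isOpenQuotientMap_mk N).isOpenMap _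
    (isOpen_ne_fun (continuous_subtype_val.dotProduct continuous_const) continuous_const)

theorem mk_mem_nonOrthogonal {u z : Fin (N + 1) → ℂ} (hu : u ≠ 0) :
    mk u hu ∈ nonOrthogonal z ↔ u ⬝ᵥ z ≠ 0 := by
  refine ⟨?_, fun h => ⟨⟨u, hu⟩, h, rfl⟩⟩
  rintro ⟨u', hu', h⟩
  obtain ⟨c, hc, hcu : u = c • u'.1⟩ := Quotient.exact h
  rw [hcu, smul_dotProduct, smul_eq_mul]
  exact mul_ne_zero hc hu'

end ProjSpace

theorem UnordConf.isOpenQuotientMap_mk (k : ℕ) (Z : Type) [TopologicalSpace Z] :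
    IsOpenQuotientMap (Quotient.mk (confSetoid k Z)) :=
  isOpenQuotientMap_quotientMk_of_homeomorph _
    (fun σ : Equiv.Perm (Fin k) =>
      ({ toEquiv := σ.symm.arrowCongr (Equiv.refl Z)
         continuous_toFun := continuous_pi fun _ => continuous_apply _
         continuous_invFun := continuous_pi fun _ => continuous_apply _ } :
        (Fin k → Z) ≃ₜ (Fin k → Z)).subtype fun w => (σ.injective_comp w).symm)
    fun w w' => ⟨fun ⟨σ, h⟩ => ⟨σ.symm, Subtype.ext <| funext fun i =>
        (congrFun h _).trans (congrArg w'.1 (σ.apply_symm_apply i))⟩,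
      fun ⟨σ, h⟩ => ⟨σ.symm, by subst h; funext i; exact congrArg w.1 (σ.apply_symm_apply i).symm⟩⟩

abbrev IndepTuple (k N : ℕ) : Type := {v : Fin k → Fin (N + 1) → ℂ // LinearIndependent ℂ v}

namespace IndepTuple

variable {k N M : ℕ}

theorem injective_mk (v : IndepTuple k N) :
    Function.Injective fun i => ProjSpace.mk (v.1 i) (v.2.ne_zero i) := by
  intro i j h
  by_contra hij
  refine (ProjSpace.mk_eq_mk_iff _ _).1 h ?_
  convert v.2.comp ![i, j] (injective_pair_iff_ne.2 hij)
  ext l; fin_cases l <;> rfl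

noncomputable def toOrdConf (v : IndepTuple k N) : OrdConf k (ProjSpace N) :=
  ⟨_, v.injective_mk⟩

noncomputable def toUnordConf (v : IndepTuple k N) : UnordConf k (ProjSpace N) :=
  Quotient.mk _ v.toOrdConf

theorem toUnordConf_eq_iff {v w : IndepTuple k N} :
    v.toUnordConf = w.toUnordConf ↔
      ∃ σ : Equiv.Perm (Fin k), ∃ c : Fin k → ℂ, ∀ i, w.1 (σ i) = c i • v.1 i := by
  refine Quotient.eq.trans ⟨fun ⟨σ, h⟩ => ?_, fun ⟨σ, c, h⟩ => ⟨σ, funext fun i => ?_⟩⟩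
  · choose c _ hc using fun i => Quotient.exact (congrFun h i)
    exact ⟨σ, c, hc⟩
  · refine Quotient.sound ⟨c i, fun hc => w.2.ne_zero (σ i) ?_, h i⟩
    rw [h i, hc, zero_smul]

theorem toUnordConf_eq_of_smul {v w : IndepTuple k N} (c : Fin k → ℂ)
    (h : ∀ i, w.1 i = c i • v.1 i) : v.toUnordConf = w.toUnordConf :=
  toUnordConf_eq_iff.2 ⟨1, c, h⟩

theorem toUnordConf_eq_of_comp {v w : IndepTuple k N} {v' w' : IndepTuple k M}
    (f : (Fin (N + 1) → ℂ) →ₗ[ℂ] Fin (M + 1) → ℂ) (hv : v'.1 = f ∘ v.1) (hw : w'.1 = f ∘ w.1)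
    (h : v.toUnordConf = w.toUnordConf) : v'.toUnordConf = w'.toUnordConf := by
  obtain ⟨σ, c, hc⟩ := toUnordConf_eq_iff.1 h
  exact toUnordConf_eq_iff.2 ⟨σ, c, fun i => by simp [hv, hw, hc]⟩

theorem exists_toUnordConf_eq_pair {p q : {v : Fin (N + 1) → ℂ // v ≠ 0}}
    (h : Function.Injective ![Quotient.mk (projSetoid N) p, Quotient.mk _ q]) :
    ∃ v : IndepTuple 2 N, v.1 = ![p.1, q.1] ∧
      v.toUnordConf = Quotient.mk _ ⟨![Quotient.mk _ p, Quotient.mk _ q], h⟩ := by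
  have hpq : ∀ i, ![p.1, q.1] i ≠ 0 := fun i => by fin_cases i; exacts [p.2, q.2]
  have hmk : (fun i => ProjSpace.mk _ (hpq i)) = ![Quotient.mk _ p, Quotient.mk _ q] := by
    ext i; fin_cases i <;> rfl
  exact ⟨⟨_, (ProjSpace.linearIndependent_iff_injective_mk hpq).2 (hmk ▸ h)⟩, rfl,
    congrArg (Quotient.mk _) (Subtype.ext hmk)⟩

theorem continuous_toOrdConf : Continuous (toOrdConf : IndepTuple k N → _) :=
  .subtype_mk (continuous_pi fun i => continuous_quotient_mk'.comp
    (.subtype_mk ((continuous_apply i).comp continuous_subtype_val) _)) _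

theorem isOpenQuotientMap_toOrdConf :
    IsOpenQuotientMap (toOrdConf : IndepTuple 2 N → OrdConf 2 (ProjSpace N)) := by
  let P := Pi.map fun _ : Fin 2 => Quotient.mk (projSetoid N)
  have hP : IsOpenQuotientMap P := .piMap fun _ => ProjSpace.isOpenQuotientMap_mk N
  let f : P ⁻¹' {w | Function.Injective w} → IndepTuple 2 N := fun w =>
    ⟨fun i => (w.1 i).1, (ProjSpace.linearIndependent_iff_injective_mk fun i => (w.1 i).2).2 w.2⟩
  have hf : Continuous f := .subtype_mk (continuous_pi fun i =>
    continuous_subtype_val.comp ((continuous_apply i).comp continuous_subtype_val)) _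
  -- `toOrdConf ∘ f` is the restriction of the open quotient map `P` to injective tuples.
  exact .of_comp hf (fun v => ⟨⟨fun i => ⟨v.1 i, v.2.ne_zero i⟩, v.injective_mk⟩, rfl⟩)
    continuous_toOrdConf (hP.restrictPreimage _)

variable (N) in
theorem isOpenQuotientMap_toUnordConf :
    IsOpenQuotientMap (toUnordConf : IndepTuple 2 N → UnordConf 2 (ProjSpace N)) :=
  (UnordConf.isOpenQuotientMap_mk 2 _).comp isOpenQuotientMap_toOrdConf

theorem crossProduct_ne_zero (v : IndepTuple 2 2) : v.1 0 ⨯₃ v.1 1 ≠ 0 := by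
  rw [crossProduct_ne_zero_iff_linearIndependent]
  exact (show ![v.1 0, v.1 1] = v.1 from List.ofFn_inj.mp rfl) ▸ v.2

noncomputable def line : C(IndepTuple 2 2, ProjSpace 2) :=
  ⟨fun v => ProjSpace.mk _ v.crossProduct_ne_zero, continuous_quotient_mk'.comp
    (.subtype_mk (.crossProduct ((continuous_apply 0).comp continuous_subtype_val)
      ((continuous_apply 1).comp continuous_subtype_val)) _)⟩

theorem line_apply (v : IndepTuple 2 2) : v.line = ProjSpace.mk _ v.crossProduct_ne_zero := rfl

theorem line_eq_of_toUnordConf_eq {v w : IndepTuple 2 2} (h : v.toUnordConf = w.toUnordConf) :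
    v.line = w.line := by
  obtain ⟨σ, c, hc⟩ := toUnordConf_eq_iff.1 h
  have hw (j : Fin 2) : v.1 0 ⨯₃ v.1 1 ⬝ᵥ w.1 j = 0 := by
    obtain ⟨i, rfl⟩ := σ.surjective j
    rw [hc, dotProduct_smul, dotProduct_crossProduct_eq_zero, smul_zero]
  exact (ProjSpace.mk_crossProduct_eq_of_dotProduct_eq_zero _ _ (hw 0) (hw 1)).symm

end IndepTuple

open ProjSpace

noncomputable def lineMap : C(UnordConf 2 (ProjSpace 2), ProjSpace 2) :=
  (IndepTuple.isOpenQuotientMap_toUnordConf 2).lift IndepTuple.line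
    fun _ _ h => IndepTuple.line_eq_of_toUnordConf_eq h

theorem lineMap_toUnordConf (v : IndepTuple 2 2) : lineMap v.toUnordConf = v.line :=
  IsOpenQuotientMap.lift_apply _ _ _ v

theorem dotProduct_eq_zero_of_mk_eq_lineMap {u : Fin 3 → ℂ} (hu : u ≠ 0) (v : IndepTuple 2 2)
    (h : mk u hu = lineMap v.toUnordConf) (i : Fin 2) : u ⬝ᵥ v.1 i = 0 := by
  rw [lineMap_toUnordConf] at h
  obtain ⟨c, -, hc : u = _⟩ := Quotient.exact h.symm
  rw [hc, smul_dotProduct, dotProduct_crossProduct_eq_zero, smul_zero]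

section Trivialization

variable (w₁ w₂ : Fin 3 → ℂ)

namespace IndepTuple

noncomputable def project (v : IndepTuple 2 2) (hv : v.1 0 ⨯₃ v.1 1 ⬝ᵥ w₁ ⨯₃ w₂ ≠ 0) :
    IndepTuple 2 1 :=
  ⟨projFrom w₁ w₂ ∘ v.1, v.2.comp_of_comp_eq_smul _ (lineParam w₁ w₂ (v.1 0 ⨯₃ v.1 1)) hv
    (lineParam_crossProduct_projFrom w₁ w₂ v.1)⟩

noncomputable def param (s : IndepTuple 2 1) {u : Fin 3 → ℂ} (hu : u ⬝ᵥ w₁ ⨯₃ w₂ ≠ 0) :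
    IndepTuple 2 2 :=
  ⟨lineParam w₁ w₂ u ∘ s.1, s.2.comp_of_comp_eq_smul _ (projFrom w₁ w₂) hu
    fun i => projFrom_lineParam w₁ w₂ u (s.1 i)⟩

theorem line_param (s : IndepTuple 2 1) {u : Fin 3 → ℂ} (hu : u ⬝ᵥ w₁ ⨯₃ w₂ ≠ 0)
    (hu0 : u ≠ 0) : (s.param w₁ w₂ hu).line = mk u hu0 :=
  mk_crossProduct_eq_of_dotProduct_eq_zero _ hu0 (dotProduct_lineParam _ _ _ _)
    (dotProduct_lineParam _ _ _ _)

theorem toUnordConf_project_param (s : IndepTuple 2 1) {u : Fin 3 → ℂ}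
    (hu : u ⬝ᵥ w₁ ⨯₃ w₂ ≠ 0)
    (h : (s.param w₁ w₂ hu).1 0 ⨯₃ (s.param w₁ w₂ hu).1 1 ⬝ᵥ w₁ ⨯₃ w₂ ≠ 0) :
    ((s.param w₁ w₂ hu).project w₁ w₂ h).toUnordConf = s.toUnordConf :=
  (toUnordConf_eq_of_smul _ fun i => projFrom_lineParam w₁ w₂ u (s.1 i)).symm

theorem toUnordConf_param_project (v : IndepTuple 2 2) (hv : v.1 0 ⨯₃ v.1 1 ⬝ᵥ w₁ ⨯₃ w₂ ≠ 0) :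
    ((v.project w₁ w₂ hv).param w₁ w₂ hv).toUnordConf = v.toUnordConf :=
  (toUnordConf_eq_of_smul _ (lineParam_crossProduct_projFrom w₁ w₂ v.1)).symm

theorem toUnordConf_param_congr {u u' : {u : Fin 3 → ℂ // u ≠ 0}} {s s' : IndepTuple 2 1}
    (hu : Quotient.mk (projSetoid 2) u = Quotient.mk _ u') (hs : s.toUnordConf = s'.toUnordConf)
    (h : u.1 ⬝ᵥ w₁ ⨯₃ w₂ ≠ 0) (h' : u'.1 ⬝ᵥ w₁ ⨯₃ w₂ ≠ 0) :
    (s.param w₁ w₂ h).toUnordConf = (s'.param w₁ w₂ h').toUnordConf := by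
  obtain ⟨c, -, hc⟩ := Quotient.exact hu
  calc (s.param w₁ w₂ h).toUnordConf
      = (s'.param w₁ w₂ h).toUnordConf := toUnordConf_eq_of_comp (lineParam w₁ w₂ u.1) rfl rfl hs
    _ = (s'.param w₁ w₂ h').toUnordConf := toUnordConf_eq_of_smul (fun _ => c) fun i => by
        simp [param, hc, lineParam_smul]

theorem dotProduct_ne_zero_of_lineMap_mem {v : IndepTuple 2 2}
    (hv : lineMap v.toUnordConf ∈ nonOrthogonal (w₁ ⨯₃ w₂)) :
    v.1 0 ⨯₃ v.1 1 ⬝ᵥ w₁ ⨯₃ w₂ ≠ 0 := by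
  rwa [lineMap_toUnordConf, line_apply, mk_mem_nonOrthogonal] at hv

end IndepTuple

noncomputable def fibreCoord :
    C(lineMap ⁻¹' nonOrthogonal (w₁ ⨯₃ w₂), UnordConf 2 (ProjSpace 1)) :=
  ((IndepTuple.isOpenQuotientMap_toUnordConf 2).restrictPreimage _).lift
    ⟨fun v => (v.1.project w₁ w₂
        (IndepTuple.dotProduct_ne_zero_of_lineMap_mem w₁ w₂ v.2)).toUnordConf,
      (IndepTuple.isOpenQuotientMap_toUnordConf 1).continuous.comp <| .subtype_mk
        (continuous_pi fun i => (projFrom w₁ w₂).continuous_of_finiteDimensional.comp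
          ((continuous_apply i).comp (continuous_subtype_val.comp continuous_subtype_val))) _⟩
    fun _ _ h => IndepTuple.toUnordConf_eq_of_comp (projFrom w₁ w₂) rfl rfl (congrArg Subtype.val h)

theorem fibreCoord_eq {x : lineMap ⁻¹' nonOrthogonal (w₁ ⨯₃ w₂)} {v : IndepTuple 2 2}
    (hv : v.toUnordConf = x.1) (h : v.1 0 ⨯₃ v.1 1 ⬝ᵥ w₁ ⨯₃ w₂ ≠ 0) :
    fibreCoord w₁ w₂ x = (v.project w₁ w₂ h).toUnordConf := by
  obtain ⟨x, hx⟩ := x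
  subst hv
  exact IsOpenQuotientMap.lift_apply _ _ _
    (⟨v, hx⟩ : IndepTuple.toUnordConf ⁻¹' (lineMap ⁻¹' nonOrthogonal (w₁ ⨯₃ w₂)))

noncomputable def fibreParam :
    C(nonOrthogonal (w₁ ⨯₃ w₂) × UnordConf 2 (ProjSpace 1), UnordConf 2 (ProjSpace 2)) :=
  (((isOpenQuotientMap_mk 2).restrictPreimage _).prodMap
      (IndepTuple.isOpenQuotientMap_toUnordConf 1)).lift
    ⟨fun y => (y.2.param w₁ w₂ ((mk_mem_nonOrthogonal y.1.1.2).1 y.1.2)).toUnordConf,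
      (IndepTuple.isOpenQuotientMap_toUnordConf 2).continuous.comp <| .subtype_mk
        (continuous_pi fun i => by
          simp only [Function.comp_apply, lineParam_apply]
          exact .crossProduct (by fun_prop) (.matrix_vecMul
            ((continuous_apply i).comp (continuous_subtype_val.comp continuous_snd))
            continuous_const)) _⟩
    fun _ _ h => IndepTuple.toUnordConf_param_congr w₁ w₂
      (congrArg Subtype.val (Prod.ext_iff.1 h).1) (Prod.ext_iff.1 h).2 _ _

theorem fibreParam_eq {y : nonOrthogonal (w₁ ⨯₃ w₂) × UnordConf 2 (ProjSpace 1)}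
    {u : {u : Fin 3 → ℂ // u ≠ 0}} {s : IndepTuple 2 1} (hu : y.1.1 = Quotient.mk _ u)
    (hs : y.2 = s.toUnordConf) (h : u.1 ⬝ᵥ w₁ ⨯₃ w₂ ≠ 0) :
    fibreParam w₁ w₂ y = (s.param w₁ w₂ h).toUnordConf := by
  obtain ⟨⟨x, hx⟩, t⟩ := y
  obtain rfl : x = _ := hu
  obtain rfl : t = _ := hs
  exact IsOpenQuotientMap.lift_apply _ _ _
    ((⟨u, hx⟩, s) : (Quotient.mk _ ⁻¹' nonOrthogonal (w₁ ⨯₃ w₂)) × IndepTuple 2 1)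

theorem exists_fibreParam_eq (y : nonOrthogonal (w₁ ⨯₃ w₂) × UnordConf 2 (ProjSpace 1)) :
    ∃ (u : {u : Fin 3 → ℂ // u ≠ 0}) (s : IndepTuple 2 1) (h : u.1 ⬝ᵥ w₁ ⨯₃ w₂ ≠ 0),
      y.1.1 = Quotient.mk _ u ∧ y.2 = s.toUnordConf ∧
        fibreParam w₁ w₂ y = (s.param w₁ w₂ h).toUnordConf := by
  obtain ⟨u, hu⟩ := Quotient.mk_surjective y.1.1
  obtain ⟨s, hs⟩ := (IndepTuple.isOpenQuotientMap_toUnordConf 1).surjective y.2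
  have h := (mk_mem_nonOrthogonal u.2).1 (hu ▸ y.1.2)
  exact ⟨u, s, h, hu.symm, hs.symm, fibreParam_eq w₁ w₂ hu.symm hs.symm h⟩

theorem lineMap_fibreParam (y : nonOrthogonal (w₁ ⨯₃ w₂) × UnordConf 2 (ProjSpace 1)) :
    lineMap (fibreParam w₁ w₂ y) = y.1 := by
  obtain ⟨u, s, h, hu, -, hy⟩ := exists_fibreParam_eq w₁ w₂ y
  rw [hy, lineMap_toUnordConf, IndepTuple.line_param w₁ w₂ s h u.2, hu]
  rfl

theorem fibreParam_mem (y : nonOrthogonal (w₁ ⨯₃ w₂) × UnordConf 2 (ProjSpace 1)) :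
    fibreParam w₁ w₂ y ∈ lineMap ⁻¹' nonOrthogonal (w₁ ⨯₃ w₂) :=
  show lineMap _ ∈ _ from (lineMap_fibreParam w₁ w₂ y).symm ▸ y.1.2

theorem fibreCoord_fibreParam (y : nonOrthogonal (w₁ ⨯₃ w₂) × UnordConf 2 (ProjSpace 1)) :
    fibreCoord w₁ w₂ ⟨fibreParam w₁ w₂ y, fibreParam_mem w₁ w₂ y⟩ = y.2 := by
  obtain ⟨u, s, h, -, hs, hys⟩ := exists_fibreParam_eq w₁ w₂ y
  have h' := IndepTuple.dotProduct_ne_zero_of_lineMap_mem w₁ w₂ (hys ▸ fibreParam_mem w₁ w₂ y)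
  rw [fibreCoord_eq w₁ w₂ hys.symm h', IndepTuple.toUnordConf_project_param, hs]

theorem fibreParam_fibreCoord (x : lineMap ⁻¹' nonOrthogonal (w₁ ⨯₃ w₂)) :
    fibreParam w₁ w₂ (⟨lineMap x, x.2⟩, fibreCoord w₁ w₂ x) = x := by
  obtain ⟨x, hx⟩ := x
  obtain ⟨v, rfl⟩ := (IndepTuple.isOpenQuotientMap_toUnordConf 2).surjective x
  have h := IndepTuple.dotProduct_ne_zero_of_lineMap_mem w₁ w₂ hx
  have hline : lineMap v.toUnordConf = mk _ v.crossProduct_ne_zero := by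
    rw [lineMap_toUnordConf, IndepTuple.line_apply]
  rw [fibreParam_eq w₁ w₂ hline (fibreCoord_eq w₁ w₂ rfl h) h,
    IndepTuple.toUnordConf_param_project]

noncomputable def localTriv : lineMap ⁻¹' nonOrthogonal (w₁ ⨯₃ w₂) ≃ₜ
    nonOrthogonal (w₁ ⨯₃ w₂) × UnordConf 2 (ProjSpace 1) where
  toFun x := (⟨lineMap x, x.2⟩, fibreCoord w₁ w₂ x)
  invFun y := ⟨fibreParam w₁ w₂ y, fibreParam_mem w₁ w₂ y⟩
  left_inv x := Subtype.ext (fibreParam_fibreCoord w₁ w₂ x)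
  right_inv y :=
    Prod.ext (Subtype.ext (lineMap_fibreParam w₁ w₂ y)) (fibreCoord_fibreParam w₁ w₂ y)
  continuous_toFun := .prodMk (.subtype_mk (lineMap.continuous.comp continuous_subtype_val) _)
    (fibreCoord w₁ w₂).continuous
  continuous_invFun := (fibreParam w₁ w₂).continuous.subtype_mk _

end Trivialization

/-- The map sending an unordered pair of distinct points `{p,q}` of `ℙ²` to the line `pq`
(a point of the dual projective plane, given in dual coordinates by a nonzero vector
orthogonal to representatives of both points) is a locally trivial fibration
`B(2,ℙ²) → (ℙ²)ᵛ` with fibre isomorphic to `B(2,ℙ¹)`. -/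
theorem b2p2_line_fibration :
    ∃ π : C(UnordConf 2 (ProjSpace 2), ProjSpace 2),
      -- π is the map sending a pair of distinct points to the line through them:
      (∀ (p q : {v : Fin 3 → ℂ // v ≠ 0})
        (h : Function.Injective
          (![Quotient.mk (projSetoid 2) p, Quotient.mk (projSetoid 2) q] : Fin 2 → ProjSpace 2)),
        ∀ u : {v : Fin 3 → ℂ // v ≠ 0},
          Quotient.mk (projSetoid 2) u =
            π (Quotient.mk (confSetoid 2 (ProjSpace 2))
              ⟨![Quotient.mk (projSetoid 2) p, Quotient.mk (projSetoid 2) q], h⟩) →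
          (∑ i, u.1 i * p.1 i) = 0 ∧ (∑ i, u.1 i * q.1 i) = 0) ∧
      -- π is a locally trivial fibration with fibre B(2,ℙ¹):
      (∀ b : ProjSpace 2, ∃ U : Set (ProjSpace 2), IsOpen U ∧ b ∈ U ∧
        ∃ e : (π ⁻¹' U : Set (UnordConf 2 (ProjSpace 2))) ≃ₜ U × UnordConf 2 (ProjSpace 1),
          ∀ x, ((e x).1 : ProjSpace 2) = π x.1) := by
  refine ⟨lineMap, fun p q h u hu => ?_, fun b => ?_⟩
  · obtain ⟨v, hv, hvpq⟩ := IndepTuple.exists_toUnordConf_eq_pair h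
    have hdot := dotProduct_eq_zero_of_mk_eq_lineMap u.2 v (hvpq ▸ hu)
    simp only [hv] at hdot
    exact ⟨hdot 0, hdot 1⟩
  · obtain ⟨β, rfl⟩ := Quotient.mk_surjective b
    obtain ⟨w₁, w₂, hw⟩ := exists_dotProduct_crossProduct_ne_zero β.2
    exact ⟨_, isOpen_nonOrthogonal _, (mk_mem_nonOrthogonal β.2).2 hw, localTriv w₁ w₂,
      fun _ => rfl⟩
end

section
/- Let K be a set of four points of ℙ^2 in general position and let τ ⊂ ℙ^2 be a line disjoint from K. Then exactly two conics of the pencil M_K through K are tangent to τ; moreover these two conics coincide if and only if τ meets the base locus K of the pencil (so under the disjointness hypothesis they are always distinct). -/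
open MvPolynomial

/-- `Q` is a member of the pencil of conics through the four points `a 0, …, a 3`. -/
def InConicPencil (a : Fin 4 → Fin 3 → ℂ) (Q : MvPolynomial (Fin 3) ℂ) : Prop :=
  Q ∈ homogeneousSubmodule (Fin 3) ℂ 2 ∧ ∀ i, eval (a i) Q = 0

/-- The conic `Q` is tangent to the line spanned by `p` and `q`: the restriction of `Q` to the
line, a binary quadratic form in the parameters `(s,u)`, is nonzero with a double root. -/
def TangentAlong (p q : Fin 3 → ℂ) (Q : MvPolynomial (Fin 3) ℂ) : Prop :=
  ∃ c α β : ℂ, c ≠ 0 ∧ (α ≠ 0 ∨ β ≠ 0) ∧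
    ∀ s u : ℂ, eval (s • p + u • q) Q = c * (α * s + β * u) ^ 2

/-!
The pencil is spanned by the line pairs `K₁ = a₀a₁ · a₃a₂` and `K₂ = a₀a₂ · a₃a₁`: a conic through
the four points that also vanishes at `a₀ + a₁` and `a₀ + a₂` is zero. On `τ` the four lines
restrict to binary linear forms `ℓ₁, ℓ₂` (from `K₁`) and `ℓ₃, ℓ₄` (from `K₂`), and `λ K₁ + μ K₂` is
tangent to `τ` iff the discriminant of `λ ℓ₁ℓ₂ + μ ℓ₃ℓ₄` vanishes. That discriminant is a binary
quadratic form in `(λ, μ)` whose own discriminant is `16 [ℓ₁ℓ₃] [ℓ₁ℓ₄] [ℓ₂ℓ₃] [ℓ₂ℓ₄]`, the brackets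
being `2 × 2` determinants. A line of `K₁` and a line of `K₂` meet in a base point `aₖ`, and their
bracket is `± det (aₖ, aᵢ, aⱼ) · det (aₖ, p, q)`, which is nonzero because `aₖ ∉ τ`. Hence the
tangency condition has exactly two distinct roots `(λ : μ)`.
-/

open Matrix

theorem Finsupp.exists_eq_single_add_single_of_degree_eq_two {σ : Type*} {d : σ →₀ ℕ}
    (h : d.degree = 2) : ∃ i j, d = single i 1 + single j 1 := by
  classical
  have hcard : Multiset.card (toMultiset d) = 2 := by
    rw [card_toMultiset, ← h, degree_apply]; rfl
  obtain ⟨i, j, hij⟩ := Multiset.card_eq_two.1 hcard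
  refine ⟨i, j, ?_⟩
  rw [← toMultiset_toFinsupp d, hij, Multiset.insert_eq_cons, ← Multiset.singleton_add,
    map_add, Multiset.toFinsupp_singleton, Multiset.toFinsupp_singleton]

theorem MvPolynomial.IsHomogeneous.exists_eval_eq_dotProduct_mulVec {σ R : Type*} [Fintype σ]
    [CommRing R] {Q : MvPolynomial σ R} (hQ : Q.IsHomogeneous 2) :
    ∃ M : Matrix σ σ R, ∀ x, eval x Q = x ⬝ᵥ M *ᵥ x := by
  classical
  have hmem : Q ∈ homogeneousSubmodule σ R 2 := hQ
  rw [homogeneousSubmodule_eq_finsupp_supported, AddMonoidAlgebra.supported_eq_span_single]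
    at hmem
  clear hQ
  induction hmem using Submodule.span_induction with
  | mem P hP =>
    obtain ⟨d, hd, rfl⟩ := hP
    obtain ⟨i, j, rfl⟩ := Finsupp.exists_eq_single_add_single_of_degree_eq_two hd
    refine ⟨Matrix.single i j 1, fun x => ?_⟩
    change eval x (monomial (Finsupp.single i 1 + Finsupp.single j 1) 1) = _
    simp [single_mulVec_eq, monomial_single_add, ← X_pow_eq_monomial, mul_comm]
  | zero => exact ⟨0, by simp⟩
  | add P P' _ _ hP hP' =>
    obtain ⟨M, hM⟩ := hP
    obtain ⟨M', hM'⟩ := hP'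
    exact ⟨M + M', fun x => by simp [hM, hM', add_mulVec]⟩
  | smul c P _ hP =>
    obtain ⟨M, hM⟩ := hP
    exact ⟨c • M, fun x => by simp [hM, smul_mulVec]⟩

theorem MvPolynomial.IsHomogeneous.eval_smul_add_smul_add_smul {σ R : Type*} [Fintype σ]
    [CommRing R] {Q : MvPolynomial σ R} (hQ : Q.IsHomogeneous 2) (u v w : σ → R) (r s t : R) :
    eval (r • u + s • v + t • w) Q =
      r ^ 2 * eval u Q + s ^ 2 * eval v Q + t ^ 2 * eval w Q
        + r * s * (eval (u + v) Q - eval u Q - eval v Q)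
        + r * t * (eval (u + w) Q - eval u Q - eval w Q)
        + s * t * (eval (v + w) Q - eval v Q - eval w Q) := by
  obtain ⟨M, hM⟩ := hQ.exists_eval_eq_dotProduct_mulVec
  simp only [hM, mulVec_add, mulVec_smul, dotProduct_add, add_dotProduct, dotProduct_smul,
    smul_dotProduct, smul_eq_mul]
  ring

section Determinant

variable {R : Type*} [CommRing R]

theorem cramer_fin_three (u v w x : Fin 3 → R) :
    (of ![u, v, w]).det • x =
      (of ![x, v, w]).det • u + (of ![u, x, w]).det • v + (of ![u, v, x]).det • w := by
  ext i; fin_cases i <;>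
    simp only [det_fin_three, of_apply, cons_val', cons_val_fin_one, cons_val_zero, cons_val_one,
      cons_val, Fin.zero_eta, Fin.mk_one, Fin.reduceFinMk, Pi.add_apply, Pi.smul_apply,
      smul_eq_mul] <;>
    ring

theorem det_mul_det_sub_det_mul_det (u v w x y : Fin 3 → R) :
    (of ![u, v, x]).det * (of ![u, w, y]).det - (of ![u, v, y]).det * (of ![u, w, x]).det =
      (of ![u, v, w]).det * (of ![u, x, y]).det := by
  simp only [det_fin_three, of_apply, cons_val', cons_val_fin_one, cons_val_zero, cons_val_one,
    cons_val]
  ring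

theorem det_mul_det_sub_det_mul_det' (u v w x y : Fin 3 → R) :
    (of ![v, u, x]).det * (of ![w, u, y]).det - (of ![v, u, y]).det * (of ![w, u, x]).det =
      (of ![u, v, w]).det * (of ![u, x, y]).det := by
  simp only [det_fin_three, of_apply, cons_val', cons_val_fin_one, cons_val_zero, cons_val_one,
    cons_val]
  ring

variable {K : Type*} [Field K]

theorem eq_cramer_fin_three {u v w : Fin 3 → K} (h : (of ![u, v, w]).det ≠ 0) (x : Fin 3 → K) :
    x = ((of ![x, v, w]).det / (of ![u, v, w]).det) • u
      + ((of ![u, x, w]).det / (of ![u, v, w]).det) • v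
      + ((of ![u, v, x]).det / (of ![u, v, w]).det) • w := by
  conv_lhs => rw [← inv_smul_smul₀ h x, cramer_fin_three]
  simp only [smul_add, smul_smul, div_eq_inv_mul]

theorem det_ne_zero_of_linearIndependent {u v w : Fin 3 → K}
    (h : LinearIndependent K ![u, v, w]) : (of ![u, v, w]).det ≠ 0 :=
  (isUnit_iff_isUnit_det _).1 (linearIndependent_rows_iff_isUnit.1 h) |>.ne_zero

theorem det_ne_zero_of_forall_ne_smul_add_smul {u p q : Fin 3 → K}
    (hpq : LinearIndependent K ![p, q]) (hu : ∀ s t : K, u ≠ s • p + t • q) :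
    (of ![u, p, q]).det ≠ 0 := by
  refine det_ne_zero_of_linearIndependent (linearIndependent_finCons.2 ⟨hpq, fun hmem => ?_⟩)
  rw [range_cons, range_cons, range_empty, Set.union_empty, Set.singleton_union,
    Submodule.mem_span_pair] at hmem
  obtain ⟨s, t, hst⟩ := hmem
  exact hu s t hst.symm

end Determinant

section LineThrough

variable {R : Type*} [CommRing R]

noncomputable def lineThrough (u v : Fin 3 → R) : MvPolynomial (Fin 3) R :=
  ∑ i, C ((u ⨯₃ v) i) * X i

theorem eval_lineThrough (u v x : Fin 3 → R) :
    eval x (lineThrough u v) = (of ![u, v, x]).det := by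
  simp only [lineThrough, Fin.sum_univ_three, map_add, map_mul, eval_C, eval_X, cross_apply,
    det_fin_three, of_apply, cons_val', cons_val_fin_one, cons_val_zero, cons_val_one, cons_val]
  ring

theorem eval_add_lineThrough (u v x y : Fin 3 → R) :
    eval (x + y) (lineThrough u v) = eval x (lineThrough u v) + eval y (lineThrough u v) := by
  simp [lineThrough, Finset.sum_add_distrib, mul_add]

theorem eval_smul_lineThrough (u v x : Fin 3 → R) (s : R) :
    eval (s • x) (lineThrough u v) = s * eval x (lineThrough u v) := by
  simp [lineThrough, Finset.mul_sum, mul_left_comm]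

theorem eval_smul_add_smul_lineThrough (u v p q : Fin 3 → R) (s t : R) :
    eval (s • p + t • q) (lineThrough u v) = (of ![u, v, p]).det * s + (of ![u, v, q]).det * t := by
  rw [eval_add_lineThrough, eval_smul_lineThrough, eval_smul_lineThrough, eval_lineThrough,
    eval_lineThrough, mul_comm s, mul_comm t]

theorem eval_lineThrough_left (u v : Fin 3 → R) : eval u (lineThrough u v) = 0 := by
  rw [eval_lineThrough]; exact det_zero_of_row_eq (i := 0) (j := 2) (by decide) rfl

theorem eval_lineThrough_right (u v : Fin 3 → R) : eval v (lineThrough u v) = 0 := by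
  rw [eval_lineThrough]; exact det_zero_of_row_eq (i := 1) (j := 2) (by decide) rfl

theorem isHomogeneous_lineThrough (u v : Fin 3 → R) : (lineThrough u v).IsHomogeneous 1 :=
  IsHomogeneous.sum _ _ _ fun i _ => isHomogeneous_C_mul_X _ i

end LineThrough

section BinaryQuadratic

variable {K : Type*} [Field K]

def HasDoubleRoot (f : K → K → K) : Prop :=
  ∃ c α β : K, c ≠ 0 ∧ (α ≠ 0 ∨ β ≠ 0) ∧ ∀ s u, f s u = c * (α * s + β * u) ^ 2

theorem hasDoubleRoot_iff [NeZero (2 : K)] (A B C : K) :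
    HasDoubleRoot (fun s u => A * s ^ 2 + B * s * u + C * u ^ 2) ↔
      ¬(A = 0 ∧ B = 0 ∧ C = 0) ∧ discrim A B C = 0 := by
  constructor
  · rintro ⟨c, α, β, hc, hαβ, h⟩
    have hA : A = c * α ^ 2 := by simpa using h 1 0
    have hC : C = c * β ^ 2 := by simpa using h 0 1
    have hB : B = 2 * c * α * β := by linear_combination h 1 1 - h 1 0 - h 0 1
    refine ⟨fun ⟨hA0, _, hC0⟩ => ?_, by rw [discrim, hA, hB, hC]; ring⟩
    rcases hαβ with hα | hβ
    · exact mul_ne_zero hc (pow_ne_zero 2 hα) (hA ▸ hA0)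
    · exact mul_ne_zero hc (pow_ne_zero 2 hβ) (hC ▸ hC0)
  · rintro ⟨hne, hdisc⟩
    have h4 : (4 : K) ≠ 0 := by
      rw [show (4 : K) = 2 * 2 by norm_num]; exact mul_ne_zero two_ne_zero two_ne_zero
    rw [discrim, sub_eq_zero] at hdisc
    by_cases hA : A = 0
    · have hB : B = 0 := pow_eq_zero_iff two_ne_zero |>.1 (by rw [hdisc, hA]; ring)
      have hC : C ≠ 0 := fun hC => hne ⟨hA, hB, hC⟩
      exact ⟨C, 0, 1, hC, Or.inr one_ne_zero, fun s u => by rw [hA, hB]; ring⟩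
    · refine ⟨(4 * A)⁻¹, 2 * A, B, by simp [hA, h4], Or.inl (mul_ne_zero two_ne_zero hA),
        fun s u => ?_⟩
      field_simp
      linear_combination (-u ^ 2) * hdisc

theorem mul_add_mul_eq_zero_iff {α β : K} (h : α ≠ 0 ∨ β ≠ 0) (l m : K) :
    α * l + β * m = 0 ↔ ∃ t : K, (l, m) = t • (β, -α) := by
  simp only [Prod.smul_mk, smul_eq_mul, Prod.mk.injEq]
  constructor
  · intro hlm
    rcases h with hα | hβ
    · exact ⟨-m / α, by field_simp; linear_combination hlm, by field_simp⟩
    · exact ⟨l / β, by field_simp, by field_simp; linear_combination hlm⟩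
  · rintro ⟨t, rfl, rfl⟩
    ring

theorem exists_factors_of_binary_quadratic [IsAlgClosed K] (a b c : K) :
    ∃ α β γ δ : K, a = α * γ ∧ b = α * δ + β * γ ∧ c = β * δ := by
  by_cases ha : a = 0
  · exact ⟨0, 1, b, c, by simp [ha], by ring, by ring⟩
  · obtain ⟨z, hz⟩ := IsAlgClosed.exists_root (.C a * .X ^ 2 + .C b * .X + .C c)
      (by rw [Polynomial.degree_quadratic ha]; decide)
    simp only [Polynomial.IsRoot, Polynomial.eval_add, Polynomial.eval_mul, Polynomial.eval_C,
      Polynomial.eval_pow, Polynomial.eval_X] at hz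
    exact ⟨1, -z, a, a * z + b, by ring, by ring, by linear_combination hz⟩

theorem exists_two_roots_of_discrim_ne_zero [IsAlgClosed K] {a b c : K}
    (h : discrim a b c ≠ 0) :
    ∃ r₁ r₂ : K × K, r₁.1 * r₂.2 ≠ r₁.2 * r₂.1 ∧ ∀ l m : K, a * l ^ 2 + b * l * m + c * m ^ 2 = 0 ↔
      (∃ t : K, (l, m) = t • r₁) ∨ ∃ t : K, (l, m) = t • r₂ := by
  obtain ⟨α, β, γ, δ, rfl, rfl, rfl⟩ := exists_factors_of_binary_quadratic a b c
  have hdet : α * δ - β * γ ≠ 0 := by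
    rw [show discrim (α * γ) (α * δ + β * γ) (β * δ) = (α * δ - β * γ) ^ 2 by
      rw [discrim]; ring] at h
    exact pow_ne_zero_iff two_ne_zero |>.1 h
  have hαβ : α ≠ 0 ∨ β ≠ 0 := by
    by_contra! h0; exact hdet (by rw [h0.1, h0.2]; ring)
  have hγδ : γ ≠ 0 ∨ δ ≠ 0 := by
    by_contra! h0; exact hdet (by rw [h0.1, h0.2]; ring)
  refine ⟨(β, -α), (δ, -γ), fun h' => hdet (by linear_combination h'), fun l m => ?_⟩
  rw [← mul_add_mul_eq_zero_iff hαβ, ← mul_add_mul_eq_zero_iff hγδ, ← mul_eq_zero]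
  constructor <;> intro h' <;> linear_combination h'

variable {P : K → K → K → K → K} {x₁ y₁ x₂ y₂ x₃ y₃ x₄ y₄ : K}

theorem eq_zero_of_forall_pencil_eq_zero
    (hP : ∀ l m s u, P l m s u =
      l * ((x₁ * s + y₁ * u) * (x₂ * s + y₂ * u)) + m * ((x₃ * s + y₃ * u) * (x₄ * s + y₄ * u)))
    (h₁₃ : x₁ * y₃ - y₁ * x₃ ≠ 0) (h₁₄ : x₁ * y₄ - y₁ * x₄ ≠ 0) (h₂₃ : x₂ * y₃ - y₂ * x₃ ≠ 0)
    {l m : K} (h : ∀ s u, P l m s u = 0) : l = 0 ∧ m = 0 := by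
  have hl : l * ((x₁ * y₃ - y₁ * x₃) * (x₂ * y₃ - y₂ * x₃)) = 0 := by
    rw [← h y₃ (-x₃), hP]; ring
  have hm : m * ((x₁ * y₃ - y₁ * x₃) * (x₁ * y₄ - y₁ * x₄)) = 0 := by
    rw [← h y₁ (-x₁), hP]; ring
  exact ⟨(mul_eq_zero.1 hl).resolve_right (mul_ne_zero h₁₃ h₂₃),
    (mul_eq_zero.1 hm).resolve_right (mul_ne_zero h₁₃ h₁₄)⟩

theorem exists_two_hasDoubleRoot_of_pencil [IsAlgClosed K] [NeZero (2 : K)]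
    (hP : ∀ l m s u, P l m s u =
      l * ((x₁ * s + y₁ * u) * (x₂ * s + y₂ * u)) + m * ((x₃ * s + y₃ * u) * (x₄ * s + y₄ * u)))
    (h₁₃ : x₁ * y₃ - y₁ * x₃ ≠ 0) (h₁₄ : x₁ * y₄ - y₁ * x₄ ≠ 0) (h₂₃ : x₂ * y₃ - y₂ * x₃ ≠ 0)
    (h₂₄ : x₂ * y₄ - y₂ * x₄ ≠ 0) :
    ∃ r₁ r₂ : K × K, HasDoubleRoot (P r₁.1 r₁.2) ∧ HasDoubleRoot (P r₂.1 r₂.2) ∧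
      (∀ c, ¬∀ s u, P r₂.1 r₂.2 s u = c * P r₁.1 r₁.2 s u) ∧ ∀ l m, HasDoubleRoot (P l m) →
        (∃ t : K, (l, m) = t • r₁) ∨ ∃ t : K, (l, m) = t • r₂ := by
  set A := (x₁ * y₂ - y₁ * x₂) ^ 2
  set B := 2 * (x₁ * y₂ + y₁ * x₂) * (x₃ * y₄ + y₃ * x₄)
    - 4 * (x₁ * x₂ * y₃ * y₄ + y₁ * y₂ * x₃ * x₄)
  set C := (x₃ * y₄ - y₃ * x₄) ^ 2
  have hdouble : ∀ l m, HasDoubleRoot (P l m) ↔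
      ¬(l = 0 ∧ m = 0) ∧ A * l ^ 2 + B * l * m + C * m ^ 2 = 0 := by
    intro l m
    have hPlm : P l m = fun s u => (l * x₁ * x₂ + m * x₃ * x₄) * s ^ 2
        + (l * (x₁ * y₂ + y₁ * x₂) + m * (x₃ * y₄ + y₃ * x₄)) * s * u
        + (l * y₁ * y₂ + m * y₃ * y₄) * u ^ 2 := by
      funext s u; rw [hP]; ring
    rw [hPlm, hasDoubleRoot_iff, discrim]
    refine and_congr (not_congr ⟨fun h0 => ?_, ?_⟩) (by rw [iff_iff_eq]; congr 1; ring)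
    · refine eq_zero_of_forall_pencil_eq_zero hP h₁₃ h₁₄ h₂₃ fun s u => ?_
      rw [hP]; linear_combination s ^ 2 * h0.1 + s * u * h0.2.1 + u ^ 2 * h0.2.2
    · rintro ⟨rfl, rfl⟩; simp
  have hdisc : discrim A B C ≠ 0 := by
    rw [show discrim A B C = 16 * ((x₁ * y₃ - y₁ * x₃) * (x₁ * y₄ - y₁ * x₄) *
        (x₂ * y₃ - y₂ * x₃) * (x₂ * y₄ - y₂ * x₄)) by rw [discrim]; ring]
    have h16 : (16 : K) ≠ 0 := by
      rw [show (16 : K) = 2 ^ 4 by norm_num]; exact pow_ne_zero 4 two_ne_zero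
    exact mul_ne_zero h16 (mul_ne_zero (mul_ne_zero (mul_ne_zero h₁₃ h₁₄) h₂₃) h₂₄)
  obtain ⟨r₁, r₂, hr, hroots⟩ := exists_two_roots_of_discrim_ne_zero hdisc
  have hr₁ : ¬(r₁.1 = 0 ∧ r₁.2 = 0) := fun h0 => hr (by rw [h0.1, h0.2]; ring)
  have hr₂ : ¬(r₂.1 = 0 ∧ r₂.2 = 0) := fun h0 => hr (by rw [h0.1, h0.2]; ring)
  refine ⟨r₁, r₂, (hdouble _ _).2 ⟨hr₁, (hroots _ _).2 (.inl ⟨1, by simp⟩)⟩,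
    (hdouble _ _).2 ⟨hr₂, (hroots _ _).2 (.inr ⟨1, by simp⟩)⟩, fun c hc => hr ?_,
    fun l m h => (hroots l m).1 ((hdouble l m).1 h).2⟩
  obtain ⟨h₁, h₂⟩ := eq_zero_of_forall_pencil_eq_zero hP h₁₃ h₁₄ h₂₃
    (l := r₂.1 - c * r₁.1) (m := r₂.2 - c * r₁.2) fun s u => by
      have h := hc s u
      rw [hP, hP] at h
      rw [hP]; linear_combination h
  linear_combination r₁.1 * h₂ - r₁.2 * h₁

end BinaryQuadratic

theorem MvPolynomial.IsHomogeneous.eq_zero_of_eval_eq_zero_of_det_ne_zero {K : Type*} [Field K]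
    [Infinite K] {Q : MvPolynomial (Fin 3) K} (hQ : Q.IsHomogeneous 2) {u v w z : Fin 3 → K}
    (huvw : (of ![u, v, w]).det ≠ 0) (hzv : (of ![u, z, w]).det ≠ 0)
    (hzw : (of ![u, v, z]).det ≠ 0) (hu : eval u Q = 0) (hv : eval v Q = 0) (hw : eval w Q = 0)
    (huv : eval (u + v) Q = 0) (huw : eval (u + w) Q = 0) (hz : eval z Q = 0) : Q = 0 := by
  -- in the basis `u, v, w` only the `v w` cross term of `Q` survives
  have key : ∀ x, eval x Q = (of ![u, x, w]).det / (of ![u, v, w]).det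
      * ((of ![u, v, x]).det / (of ![u, v, w]).det) * eval (v + w) Q := by
    intro x
    conv_lhs => rw [eq_cramer_fin_three huvw x]
    rw [hQ.eval_smul_add_smul_add_smul, hu, hv, hw, huv, huw]
    ring
  have hvw : eval (v + w) Q = 0 := by
    rw [key z] at hz
    simpa [huvw, hzv, hzw] using hz
  exact MvPolynomial.funext fun x => by rw [key x, hvw, mul_zero, map_zero]

section Pencil

variable {a : Fin 4 → Fin 3 → ℂ}

theorem InConicPencil.smul_add_smul {Q₁ Q₂ : MvPolynomial (Fin 3) ℂ} (h₁ : InConicPencil a Q₁)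
    (h₂ : InConicPencil a Q₂) (l m : ℂ) : InConicPencil a (l • Q₁ + m • Q₂) :=
  ⟨add_mem (Submodule.smul_mem _ _ h₁.1) (Submodule.smul_mem _ _ h₂.1),
    fun i => by simp [h₁.2 i, h₂.2 i]⟩

theorem inConicPencil_lineThrough_mul {i j k l : Fin 4}
    (h : ∀ n, n = i ∨ n = j ∨ n = k ∨ n = l) :
    InConicPencil a (lineThrough (a i) (a j) * lineThrough (a k) (a l)) := by
  refine ⟨(isHomogeneous_lineThrough _ _).mul (isHomogeneous_lineThrough _ _), fun n => ?_⟩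
  rcases h n with rfl | rfl | rfl | rfl <;>
    simp [eval_lineThrough_left, eval_lineThrough_right]

theorem exists_eq_smul_add_smul_of_inConicPencil
    (hgen : ∀ i j k : Fin 4, i ≠ j → i ≠ k → j ≠ k → LinearIndependent ℂ ![a i, a j, a k])
    {Q : MvPolynomial (Fin 3) ℂ} (hQ : InConicPencil a Q) :
    ∃ l m : ℂ, Q = l • (lineThrough (a 0) (a 1) * lineThrough (a 3) (a 2))
      + m • (lineThrough (a 0) (a 2) * lineThrough (a 3) (a 1)) := by
  set K₁ := lineThrough (a 0) (a 1) * lineThrough (a 3) (a 2)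
  set K₂ := lineThrough (a 0) (a 2) * lineThrough (a 3) (a 1)
  have hK₁ : InConicPencil a K₁ := inConicPencil_lineThrough_mul (by decide)
  have hK₂ : InConicPencil a K₂ := inConicPencil_lineThrough_mul (by decide)
  have hdet : ∀ i j k : Fin 4, i ≠ j ∧ i ≠ k ∧ j ≠ k → (of ![a i, a j, a k]).det ≠ 0 :=
    fun i j k h => det_ne_zero_of_linearIndependent (hgen i j k h.1 h.2.1 h.2.2)
  have e₁ : eval (a 0 + a 1) K₁ = 0 := by
    simp [K₁, eval_add_lineThrough, eval_lineThrough_left, eval_lineThrough_right]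
  have e₂ : eval (a 0 + a 2) K₂ = 0 := by
    simp [K₂, eval_add_lineThrough, eval_lineThrough_left, eval_lineThrough_right]
  have g₁ : eval (a 0 + a 2) K₁ ≠ 0 := by
    simp only [K₁, map_mul, eval_add_lineThrough, eval_lineThrough_left,
      eval_lineThrough_right, zero_add, add_zero]
    rw [eval_lineThrough, eval_lineThrough]
    exact mul_ne_zero (hdet 0 1 2 (by decide)) (hdet 3 2 0 (by decide))
  have g₂ : eval (a 0 + a 1) K₂ ≠ 0 := by
    simp only [K₂, map_mul, eval_add_lineThrough, eval_lineThrough_left,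
      eval_lineThrough_right, zero_add, add_zero]
    rw [eval_lineThrough, eval_lineThrough]
    exact mul_ne_zero (hdet 0 2 1 (by decide)) (hdet 3 1 0 (by decide))
  refine ⟨eval (a 0 + a 2) Q / eval (a 0 + a 2) K₁, eval (a 0 + a 1) Q / eval (a 0 + a 1) K₂,
    sub_eq_zero.1 ?_⟩
  refine IsHomogeneous.eq_zero_of_eval_eq_zero_of_det_ne_zero
    (sub_mem hQ.1 (hK₁.smul_add_smul hK₂ _ _).1)
    (hdet 0 1 2 (by decide)) (hdet 0 3 2 (by decide)) (hdet 0 1 3 (by decide))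
    ?_ ?_ ?_ ?_ ?_ ?_ <;> simp [hQ.2, hK₁.2, hK₂.2, e₁, e₂, g₁, g₂]

end Pencil

/-- Let `K` be four points of `ℙ²` in general position and `τ` a line disjoint from `K`.
Then exactly two members of the pencil of conics through `K` are tangent to `τ`; moreover
(the two tangent members coincide exactly when `τ` meets the base locus `K`, so) under the
disjointness hypothesis they are distinct, i.e. non-proportional. -/
theorem two_tangent_conics_in_pencil (a : Fin 4 → Fin 3 → ℂ)
    (hgen : ∀ i j k : Fin 4, i ≠ j → i ≠ k → j ≠ k → LinearIndependent ℂ ![a i, a j, a k])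
    (p q : Fin 3 → ℂ) (hpq : LinearIndependent ℂ ![p, q])
    (hdisj : ∀ (i : Fin 4) (s u : ℂ), a i ≠ s • p + u • q) :
    ∃ Q₁ Q₂ : MvPolynomial (Fin 3) ℂ,
      InConicPencil a Q₁ ∧ InConicPencil a Q₂ ∧
      TangentAlong p q Q₁ ∧ TangentAlong p q Q₂ ∧
      (∀ c : ℂ, Q₂ ≠ c • Q₁) ∧
      (∀ Q : MvPolynomial (Fin 3) ℂ, InConicPencil a Q → TangentAlong p q Q →
        (∃ c : ℂ, Q = c • Q₁) ∨ (∃ c : ℂ, Q = c • Q₂)) := by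
  have hdet : ∀ i j k : Fin 4, i ≠ j ∧ i ≠ k ∧ j ≠ k → (of ![a i, a j, a k]).det ≠ 0 :=
    fun i j k h => det_ne_zero_of_linearIndependent (hgen i j k h.1 h.2.1 h.2.2)
  have hτ : ∀ i, (of ![a i, p, q]).det ≠ 0 :=
    fun i => det_ne_zero_of_forall_ne_smul_add_smul hpq (hdisj i)
  set K₁ := lineThrough (a 0) (a 1) * lineThrough (a 3) (a 2)
  set K₂ := lineThrough (a 0) (a 2) * lineThrough (a 3) (a 1)
  have hK : InConicPencil a K₁ ∧ InConicPencil a K₂ :=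
    ⟨inConicPencil_lineThrough_mul (by decide), inConicPencil_lineThrough_mul (by decide)⟩
  -- `TangentAlong p q Q` unfolds to `HasDoubleRoot fun s u => eval (s • p + u • q) Q`
  obtain ⟨r₁, r₂, h₁, h₂, hne, hall⟩ := exists_two_hasDoubleRoot_of_pencil
    (P := fun l m s u => eval (s • p + u • q) (l • K₁ + m • K₂))
    (fun l m s u => by simp only [K₁, K₂, map_add, smul_eval, map_mul,
      eval_smul_add_smul_lineThrough])
    ((det_mul_det_sub_det_mul_det _ _ _ p q).trans_ne
      (mul_ne_zero (hdet 0 1 2 (by decide)) (hτ 0)))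
    ((det_mul_det_sub_det_mul_det' (a 1) (a 0) (a 3) p q).trans_ne
      (mul_ne_zero (hdet 1 0 3 (by decide)) (hτ 1)))
    ((det_mul_det_sub_det_mul_det' (a 2) (a 3) (a 0) p q).trans_ne
      (mul_ne_zero (hdet 2 3 0 (by decide)) (hτ 2)))
    ((det_mul_det_sub_det_mul_det (a 3) (a 2) (a 1) p q).trans_ne
      (mul_ne_zero (hdet 3 2 1 (by decide)) (hτ 3)))
  refine ⟨r₁.1 • K₁ + r₁.2 • K₂, r₂.1 • K₁ + r₂.2 • K₂, hK.1.smul_add_smul hK.2 _ _,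
    hK.1.smul_add_smul hK.2 _ _, h₁, h₂, fun c hc => hne c fun s u => by rw [hc, smul_eval],
    fun Q hQ hQτ => ?_⟩
  obtain ⟨l, m, rfl⟩ := exists_eq_smul_add_smul_of_inConicPencil hgen hQ
  rcases hall l m hQτ with ⟨t, ht⟩ | ⟨t, ht⟩ <;>
    simp only [Prod.ext_iff, Prod.smul_fst, Prod.smul_snd, smul_eq_mul] at ht <;>
    [left; right] <;> exact ⟨t, by rw [ht.1, ht.2]; module⟩
end
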